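/- arXiv:2212.06102 — 6 statements merged into one kernel-verified Lean document; each statement's English description precedes it below -/
import Mathlib

section
/- Suppose p/g : 𝔹_n → 𝔹_N is a rational proper map of balls of degree d written in lowest terms with p(0) = 0 and g(0) = 1. Let r(z,z̄) = |g(z)|² − ‖p(z)‖² and let q be the real polynomial with r(z,z̄) = q(z,z̄)(1 − ‖z‖²). Then g has degree at most d−1, and g(z) = r(z,0) = q(z,0) for all z ∈ ℂⁿ (i.e., g is obtained from r, or from q, by setting the conjugate variables z̄ to zero in their complexifications). -/
/-!
Setting `z̄ = 0` in `r = Q · (1 - ⟨z, z̄⟩)` gives `g = r(z, 0) = Q(z, 0)`, because `p(0) = 0` and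
`g(0) = 1`. For the degree bound, regard polynomials in `(z, z̄)` as polynomials in `z` with
coefficients in the integral domain `ℂ[z̄]`. In this grading `r` has degree at most `d` and
`1 - ⟨z, z̄⟩` has degree `1`, so `Q` has degree at most `d - 1`, and hence so does `g = Q(z, 0)`.
-/

open Metric MvPolynomial
open scoped InnerProductSpace ComplexOrder

noncomputable section

abbrev Cn (n : ℕ) : Type := EuclideanSpace ℂ (Fin n)

noncomputable def evalPoly {n : ℕ} (g : MvPolynomial (Fin n) ℂ) (z : Cn n) : ℂ :=
  MvPolynomial.eval (fun i => z i) g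

noncomputable def sqNormP {n N : ℕ} (p : Fin N → MvPolynomial (Fin n) ℂ) (z : Cn n) : ℝ :=
  ∑ j, Complex.normSq (evalPoly (p j) z)

structure RatProperBallMap (n N d : ℕ) : Type where
  p : Fin N → MvPolynomial (Fin n) ℂ
  g : MvPolynomial (Fin n) ℂ
  lowest : ∀ h : MvPolynomial (Fin n) ℂ, h ∣ g → (∀ j, h ∣ p j) → IsUnit h
  g_ne : ∀ z : Cn n, ‖z‖ < 1 → evalPoly g z ≠ 0
  deg_eq : d = max (Finset.univ.sup fun j => (p j).totalDegree) g.totalDegree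
  maps_in : ∀ z : Cn n, ‖z‖ < 1 → sqNormP p z < Complex.normSq (evalPoly g z)
  proper : ∀ z : Cn n, ‖z‖ = 1 → Complex.normSq (evalPoly g z) - sqNormP p z = 0

noncomputable def fval {n N d : ℕ} (F : RatProperBallMap n N d) (z : Cn n) : Cn N :=
  WithLp.toLp 2 (fun j => evalPoly (F.p j) z / evalPoly F.g z)

structure BallAut (m : ℕ) : Type where
  toFun : Cn m → Cn m
  invFun : Cn m → Cn m
  maps_ball : ∀ z : Cn m, ‖z‖ < 1 → ‖toFun z‖ < 1
  maps_ball' : ∀ z : Cn m, ‖z‖ < 1 → ‖invFun z‖ < 1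
  left_inv : ∀ z : Cn m, ‖z‖ < 1 → invFun (toFun z) = z
  right_inv : ∀ z : Cn m, ‖z‖ < 1 → toFun (invFun z) = z
  holo : DifferentiableOn ℂ toFun (ball 0 1)
  holo' : DifferentiableOn ℂ invFun (ball 0 1)

noncomputable def Lambda {n N d : ℕ} (F : RatProperBallMap n N d) (z : Cn n) : ℝ :=
  (Complex.normSq (evalPoly F.g z) - sqNormP F.p z) / (1 - ‖z‖ ^ 2) ^ d

/-- The complexified underlying form `r(z, z̄) = |g(z)|² − ‖p(z)‖²`, a polynomial in the
variables `z` (the `Sum.inl` block) and `z̄` (the `Sum.inr` block). -/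
noncomputable def underlyingForm {n N : ℕ} (p : Fin N → MvPolynomial (Fin n) ℂ)
    (g : MvPolynomial (Fin n) ℂ) : MvPolynomial (Fin n ⊕ Fin n) ℂ :=
  (MvPolynomial.rename Sum.inl g)
      * (MvPolynomial.rename Sum.inr (MvPolynomial.map (starRingEnd ℂ) g))
    - ∑ j : Fin N, (MvPolynomial.rename Sum.inl (p j))
      * (MvPolynomial.rename Sum.inr (MvPolynomial.map (starRingEnd ℂ) (p j)))

/-- The complexification of `1 − ‖z‖²`. -/
noncomputable def sphereForm (n : ℕ) : MvPolynomial (Fin n ⊕ Fin n) ℂ :=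
  1 - ∑ k : Fin n, MvPolynomial.X (Sum.inl k) * MvPolynomial.X (Sum.inr k)

section SumVariables

variable {R σ τ : Type*} [CommSemiring R]

variable (R σ τ) in
def setInrZero : MvPolynomial (σ ⊕ τ) R →ₐ[R] MvPolynomial σ R :=
  aeval (Sum.elim X 0)

lemma setInrZero_rename_inl (p : MvPolynomial σ R) :
    setInrZero R σ τ (rename Sum.inl p) = p := by
  rw [setInrZero, aeval_rename, Sum.elim_comp_inl, aeval_X_left_apply]

lemma setInrZero_rename_inr (p : MvPolynomial τ R) :
    setInrZero R σ τ (rename Sum.inr p) = C (constantCoeff p) := by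
  rw [setInrZero, aeval_rename, Sum.elim_comp_inr, aeval_zero, algebraMap_eq]

lemma eval_setInrZero (z : σ → R) (P : MvPolynomial (σ ⊕ τ) R) :
    eval z (setInrZero R σ τ P) = eval (Sum.elim z 0) P := by
  induction P using MvPolynomial.induction_on with
  | C a => simp [setInrZero]
  | add p q hp hq => rw [map_add, map_add, map_add, hp, hq]
  | mul_X p i hp =>
    rw [map_mul, map_mul, map_mul, hp]
    cases i <;> simp [setInrZero]

lemma totalDegree_map_le {S : Type*} [CommSemiring S] (f : R →+* S) (p : MvPolynomial σ R) :
    (map f p).totalDegree ≤ p.totalDegree :=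
  Finset.sup_mono (support_map_subset f p)

lemma sumRingEquiv_rename_inl (p : MvPolynomial σ R) :
    sumRingEquiv R σ τ (rename Sum.inl p) = map C p := by
  induction p using MvPolynomial.induction_on with
  | C a => simp [sumRingEquiv_C]
  | add p q hp hq => simp [hp, hq]
  | mul_X p i hp => simp [hp, sumRingEquiv_X_inl]

lemma sumRingEquiv_rename_inr (p : MvPolynomial τ R) :
    sumRingEquiv R σ τ (rename Sum.inr p) = C p := by
  induction p using MvPolynomial.induction_on with
  | C a => simp [sumRingEquiv_C]
  | add p q hp hq => simp [hp, hq]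
  | mul_X p i hp => simp [hp, sumRingEquiv_X_inr]

lemma map_constantCoeff_sumRingEquiv (P : MvPolynomial (σ ⊕ τ) R) :
    map constantCoeff (sumRingEquiv R σ τ P) = setInrZero R σ τ P := by
  induction P using MvPolynomial.induction_on with
  | C a => simp [setInrZero, sumRingEquiv_C]
  | add p q hp hq => simp only [map_add, hp, hq]
  | mul_X p i hp =>
    cases i <;> simp [setInrZero, hp, sumRingEquiv_X_inl, sumRingEquiv_X_inr]

lemma totalDegree_setInrZero_le (P : MvPolynomial (σ ⊕ τ) R) :
    (setInrZero R σ τ P).totalDegree ≤ (sumRingEquiv R σ τ P).totalDegree := by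
  rw [← map_constantCoeff_sumRingEquiv]
  exact totalDegree_map_le _ _

lemma totalDegree_sumRingEquiv_rename_mul_rename_le (p : MvPolynomial σ R)
    (q : MvPolynomial τ R) :
    (sumRingEquiv R σ τ (rename Sum.inl p * rename Sum.inr q)).totalDegree ≤ p.totalDegree := by
  rw [map_mul, sumRingEquiv_rename_inl, sumRingEquiv_rename_inr]
  refine (totalDegree_mul _ _).trans ?_
  rw [totalDegree_C, add_zero]
  exact totalDegree_map_le _ _

end SumVariables

section Forms

variable {n N : ℕ}

lemma setInrZero_underlyingForm {p : Fin N → MvPolynomial (Fin n) ℂ} {g : MvPolynomial (Fin n) ℂ}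
    (hp0 : ∀ j, constantCoeff (p j) = 0) (hg0 : constantCoeff g = 1) :
    setInrZero ℂ (Fin n) (Fin n) (underlyingForm p g) = g := by
  simp only [underlyingForm, map_sub, map_sum, map_mul, setInrZero_rename_inl,
    setInrZero_rename_inr, constantCoeff_map, hp0, hg0, map_one, map_zero, mul_one, mul_zero,
    Finset.sum_const_zero, sub_zero]

lemma setInrZero_sphereForm : setInrZero ℂ (Fin n) (Fin n) (sphereForm n) = 1 := by
  simp [sphereForm, setInrZero]

lemma totalDegree_sumRingEquiv_underlyingForm_le {d : ℕ} {p : Fin N → MvPolynomial (Fin n) ℂ}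
    {g : MvPolynomial (Fin n) ℂ} (hp : ∀ j, (p j).totalDegree ≤ d) (hg : g.totalDegree ≤ d) :
    (sumRingEquiv ℂ (Fin n) (Fin n) (underlyingForm p g)).totalDegree ≤ d := by
  rw [underlyingForm, map_sub, map_sum]
  refine (totalDegree_sub _ _).trans (max_le ?_ (totalDegree_finsetSum_le fun j _ => ?_))
  · exact (totalDegree_sumRingEquiv_rename_mul_rename_le _ _).trans hg
  · exact (totalDegree_sumRingEquiv_rename_mul_rename_le _ _).trans (hp j)

lemma one_le_totalDegree_sumRingEquiv_sphereForm (k : Fin n) :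
    1 ≤ (sumRingEquiv ℂ (Fin n) (Fin n) (sphereForm n)).totalDegree := by
  have hcoeff :
      coeff (Finsupp.single k 1) (sumRingEquiv ℂ (Fin n) (Fin n) (sphereForm n)) = -X k := by
    simp only [sphereForm, map_sub, map_one, map_sum, map_mul, sumRingEquiv_X_inl,
      sumRingEquiv_X_inr, coeff_sub, coeff_one, coeff_sum]
    simp_rw [mul_comm (X _), coeff_C_mul, coeff_X]
    simp [Finsupp.single_left_inj, eq_comm (a := (0 : Fin n →₀ ℕ))]
  have hmem : Finsupp.single k 1 ∈ (sumRingEquiv ℂ (Fin n) (Fin n) (sphereForm n)).support := by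
    rw [mem_support_iff, hcoeff, neg_ne_zero]
    exact X_ne_zero k
  simpa using le_totalDegree hmem

end Forms

namespace RatProperBallMap

variable {n N d : ℕ} (F : RatProperBallMap n N d)

lemma totalDegree_g_le : F.g.totalDegree ≤ d :=
  (le_max_right _ _).trans_eq F.deg_eq.symm

lemma totalDegree_p_le (j : Fin N) : (F.p j).totalDegree ≤ d :=
  ((Finset.le_sup (f := fun j => (F.p j).totalDegree) (Finset.mem_univ j)).trans
    (le_max_left _ _)).trans_eq F.deg_eq.symm

end RatProperBallMap

theorem denominator_from_form {n N d : ℕ} (F : RatProperBallMap n N d)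
    (hp0 : ∀ j, MvPolynomial.constantCoeff (F.p j) = 0)
    (hg0 : MvPolynomial.constantCoeff F.g = 1)
    (Q : MvPolynomial (Fin n ⊕ Fin n) ℂ)
    (hQ : underlyingForm F.p F.g = Q * sphereForm n) :
    F.g.totalDegree ≤ d - 1 ∧
    (∀ z : Fin n → ℂ,
      MvPolynomial.eval (Sum.elim z 0) (underlyingForm F.p F.g) = MvPolynomial.eval z F.g) ∧
    (∀ z : Fin n → ℂ,
      MvPolynomial.eval (Sum.elim z 0) Q = MvPolynomial.eval z F.g) := by
  have hr : setInrZero ℂ (Fin n) (Fin n) (underlyingForm F.p F.g) = F.g :=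
    setInrZero_underlyingForm hp0 hg0
  have hQg : setInrZero ℂ (Fin n) (Fin n) Q = F.g := by
    rw [← hr, hQ, map_mul, setInrZero_sphereForm, mul_one]
  refine ⟨?_, fun z => by rw [← eval_setInrZero, hr], fun z => by rw [← eval_setInrZero, hQg]⟩
  rcases isEmpty_or_nonempty (Fin n) with _ | ⟨⟨k⟩⟩
  · rw [eq_C_of_isEmpty F.g, totalDegree_C]
    exact Nat.zero_le _
  have hQ0 : Q ≠ 0 := by
    rintro rfl
    simp [← hQg] at hg0
  have hS0 : sphereForm n ≠ 0 := fun h => by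
    simpa [h] using setInrZero_sphereForm (n := n)
  have hmul := totalDegree_mul_of_isDomain
    ((map_ne_zero_iff _ (sumRingEquiv ℂ (Fin n) (Fin n)).injective).mpr hQ0)
    ((map_ne_zero_iff _ (sumRingEquiv ℂ (Fin n) (Fin n)).injective).mpr hS0)
  rw [← map_mul, ← hQ] at hmul
  have hr_le := totalDegree_sumRingEquiv_underlyingForm_le F.totalDegree_p_le F.totalDegree_g_le
  have hS_ge := one_le_totalDegree_sumRingEquiv_sphereForm k
  calc F.g.totalDegree = (setInrZero ℂ (Fin n) (Fin n) Q).totalDegree := by rw [hQg]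
    _ ≤ (sumRingEquiv ℂ (Fin n) (Fin n) Q).totalDegree := totalDegree_setInrZero_le Q
    _ ≤ d - 1 := by omega
end
end

section
/- Let p : ℂ → ℂᴺ and g : ℂ → ℂ be polynomials with no common root, such that g is nowhere zero on the open unit disc 𝔻, ‖p(z)‖ < |g(z)| for all z ∈ 𝔻, and ‖p(z)‖²/|g(z)|² → 1 as |z| → 1⁻. Then g has no zeros on the closed unit disc; in particular g is nowhere zero on the unit circle. -/
/-! Since `p/g` maps the open disc into the ball, `∑ ‖pⱼ‖² < ‖g‖²` there, and by continuity
`∑ ‖pⱼ‖² ≤ ‖g‖²` on the closed disc. So at a zero of `g` on the closed disc all `pⱼ` vanish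
too, contradicting that `p/g` is in lowest terms. -/

open Metric

theorem le_on_closedBall_of_lt_on_ball {E α : Type*} [NormedAddCommGroup E] [NormedSpace ℝ E]
    [TopologicalSpace α] [LinearOrder α] [OrderClosedTopology α] {f g : E → α}
    (hf : Continuous f) (hg : Continuous g) {x : E} {r : ℝ} (hr : r ≠ 0)
    (hlt : ∀ z ∈ ball x r, f z < g z) : ∀ z ∈ closedBall x r, f z ≤ g z := by
  rw [← closure_ball x hr]
  exact fun z hz => closure_lt_subset_le hf hg (closure_mono hlt hz)

theorem sum_normSq_eval_le_normSq_eval_of_lt_on_unit_disc {ι : Type*} (s : Finset ι)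
    (p : ι → Polynomial ℂ) (g : Polynomial ℂ)
    (hlt : ∀ z : ℂ, ‖z‖ < 1 → ∑ j ∈ s, Complex.normSq ((p j).eval z) < Complex.normSq (g.eval z))
    (z : ℂ) (hz : ‖z‖ ≤ 1) :
    ∑ j ∈ s, Complex.normSq ((p j).eval z) ≤ Complex.normSq (g.eval z) := by
  have hcont (q : Polynomial ℂ) : Continuous fun z => Complex.normSq (q.eval z) :=
    Complex.continuous_normSq.comp q.continuous
  refine le_on_closedBall_of_lt_on_ball (continuous_finsetSum _ fun j _ => hcont (p j))
    (hcont g) (x := 0) one_ne_zero (fun w hw => hlt w ?_) z ?_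
  · simpa using hw
  · simpa using hz

theorem denominator_nonvanishing_closed_disc_general {N : ℕ}
    (p : Fin N → Polynomial ℂ) (g : Polynomial ℂ)
    (hcoprime : ¬∃ z : ℂ, g.eval z = 0 ∧ ∀ j, (p j).eval z = 0)
    (hmaps : ∀ z : ℂ, ‖z‖ < 1 →
      ∑ j, Complex.normSq ((p j).eval z) < Complex.normSq (g.eval z)) :
    ∀ z : ℂ, ‖z‖ ≤ 1 → g.eval z ≠ 0 := by
  intro z hz hgz
  have hsum_nonpos : ∑ j, Complex.normSq ((p j).eval z) ≤ 0 := by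
    simpa [hgz] using sum_normSq_eval_le_normSq_eval_of_lt_on_unit_disc _ p g hmaps z hz
  have hsum_zero := (Finset.sum_eq_zero_iff_of_nonneg fun j _ => Complex.normSq_nonneg _).mp
    (le_antisymm hsum_nonpos (Finset.sum_nonneg fun j _ => Complex.normSq_nonneg _))
  exact hcoprime ⟨z, hgz, fun j => Complex.normSq_eq_zero.mp (hsum_zero j (Finset.mem_univ j))⟩

/-- For a rational proper map `p/g` of the unit disc into the unit ball `𝔹_N`, written in lowest
terms, the denominator `g` has no zeros on the closed unit disc. -/
theorem denominator_nonvanishing_closed_disc {N : ℕ}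
    (p : Fin N → Polynomial ℂ) (g : Polynomial ℂ)
    (hcoprime : ¬∃ z : ℂ, g.eval z = 0 ∧ ∀ j, (p j).eval z = 0)
    (hg : ∀ z : ℂ, ‖z‖ < 1 → g.eval z ≠ 0)
    (hmaps : ∀ z : ℂ, ‖z‖ < 1 →
      ∑ j, Complex.normSq ((p j).eval z) < Complex.normSq (g.eval z))
    (hlim : ∀ ε : ℝ, 0 < ε → ∃ δ : ℝ, 0 < δ ∧ ∀ z : ℂ, 1 - δ < ‖z‖ → ‖z‖ < 1 →
      |(∑ j, Complex.normSq ((p j).eval z)) / Complex.normSq (g.eval z) - 1| < ε) :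
    ∀ z : ℂ, ‖z‖ ≤ 1 → g.eval z ≠ 0 :=
  denominator_nonvanishing_closed_disc_general p g hcoprime hmaps
end

section
/- Let B ⊂ ℝⁿ be the open unit ball, let h : closure(B) → ℝ be a C² function that is strictly positive on the closed unit ball, let k ≥ 1 be an integer, and define w : B → ℝ by w(x) = h(x)/(1 − ‖x‖²)^k. Then the least eigenvalue of the Hessian of w tends to +∞ at the boundary: for every M > 0 there exists δ > 0 such that for every x ∈ B with ‖x‖ > 1 − δ and every v ∈ ℝⁿ, vᵀ (Hess w)(x) v ≥ M ‖v‖². -/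
/-!
With `p = 1 - ‖x‖²`, the Hessian form of `w = h / p ^ k` is
`p⁻ᵏ (D²h(v,v) + 4k Dh(v) ⟪x,v⟫ / p + 2k h ‖v‖² / p + 4k(k+1) h ⟪x,v⟫² / p²)`.
Completing the square absorbs the mixed term into the last one at the cost of a bounded multiple
of `‖v‖²`. With `m = min h > 0` and bounds `C₁`, `C₂` on `Dh`, `D²h` over the compact closed ball,
the form is therefore at least `(2km / p - C) ‖v‖² / pᵏ`, which blows up as `p → 0`.
-/

open Metric Filter Topology
open scoped RealInnerProductSpace

theorem le_add_div_add_div_add_div_sq {k p m H A D t r C₁ C₂ : ℝ} (hk : 0 ≤ k) (hp : 0 < p)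
    (hm : 0 < m) (hmH : m ≤ H) (hA : |A| ≤ C₂ * r ^ 2) (hD : |D| ≤ C₁ * r) :
    (2 * k * m / p - (C₂ + k * C₁ ^ 2 / ((k + 1) * m))) * r ^ 2 ≤
      A + 4 * k * D * t / p + 2 * k * H * r ^ 2 / p + 4 * k * (k + 1) * H * t ^ 2 / p ^ 2 := by
  set s := t / p with hs
  have hkm : 0 < (k + 1) * m := by positivity
  have hmixed : -(k * D ^ 2 / ((k + 1) * m)) ≤ 4 * k * D * s + 4 * k * (k + 1) * m * s ^ 2 := by
    have : 0 ≤ k * (2 * (k + 1) * m * s + D) ^ 2 / ((k + 1) * m) := by positivity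
    have e : k * (2 * (k + 1) * m * s + D) ^ 2 / ((k + 1) * m) =
        k * D ^ 2 / ((k + 1) * m) + (4 * k * D * s + 4 * k * (k + 1) * m * s ^ 2) := by
      field_simp; ring
    linarith
  have hD2 : D ^ 2 ≤ C₁ ^ 2 * r ^ 2 := by
    rw [← sq_abs, ← mul_pow]; exact pow_le_pow_left₀ (abs_nonneg D) hD 2
  have hDterm : k * D ^ 2 / ((k + 1) * m) ≤ k * (C₁ ^ 2 * r ^ 2) / ((k + 1) * m) := by
    gcongr
  have hHr : 2 * k * m * r ^ 2 / p ≤ 2 * k * H * r ^ 2 / p := by gcongr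
  have hHs : 4 * k * (k + 1) * m * s ^ 2 ≤ 4 * k * (k + 1) * H * s ^ 2 := by gcongr
  have hAlow : -(C₂ * r ^ 2) ≤ A := neg_le_of_abs_le hA
  have e1 : 4 * k * D * t / p = 4 * k * D * s := by rw [hs]; ring
  have e2 : 4 * k * (k + 1) * H * t ^ 2 / p ^ 2 = 4 * k * (k + 1) * H * s ^ 2 := by rw [hs]; ring
  have e3 : (2 * k * m / p - (C₂ + k * C₁ ^ 2 / ((k + 1) * m))) * r ^ 2 =
      2 * k * m * r ^ 2 / p - C₂ * r ^ 2 - k * (C₁ ^ 2 * r ^ 2) / ((k + 1) * m) := by ring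
  rw [e1, e2, e3]
  linarith

theorem exists_pos_forall_le_div_one_sub_sq_pow {a C M : ℝ} (ha : 0 < a) (hC : 0 ≤ C)
    (hM : 0 < M) (k : ℕ) :
    ∃ δ > 0, ∀ r : ℝ, 0 ≤ r → r < 1 → 1 - δ < r → M ≤ (a / (1 - r ^ 2) - C) / (1 - r ^ 2) ^ k := by
  refine ⟨a / (2 * (M + C)), by positivity, fun r hr0 hr1 hδr => ?_⟩
  have hp : 0 < 1 - r ^ 2 := by nlinarith
  have hpδ : (1 - r ^ 2) * (M + C) < a := by
    have : 1 - r < a / (2 * (M + C)) := by linarith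
    rw [lt_div_iff₀ (by positivity)] at this
    nlinarith
  have hMa : M ≤ a / (1 - r ^ 2) - C := by
    rw [le_sub_iff_add_le, le_div_iff₀ hp]; linarith
  calc M ≤ a / (1 - r ^ 2) - C := hMa
    _ ≤ (a / (1 - r ^ 2) - C) / (1 - r ^ 2) ^ k :=
      le_div_self (by linarith) (by positivity) (pow_le_one₀ hp.le (by nlinarith))

section
variable {E F : Type*} [NormedAddCommGroup E] [NormedSpace ℝ E]
  [NormedAddCommGroup F] [NormedSpace ℝ F] {f : E → F} {s : Set E}

theorem IsCompact.exists_bound_fderiv_of_contDiffOn (hs : IsCompact s) (hs' : UniqueDiffOn ℝ s)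
    (hf : ContDiffOn ℝ 1 f s) : ∃ C, ∀ x ∈ interior s, ‖fderiv ℝ f x‖ ≤ C := by
  obtain ⟨C, hC⟩ := hs.exists_bound_of_continuousOn (hf.continuousOn_fderivWithin hs' le_rfl)
  refine ⟨C, fun x hx => ?_⟩
  rw [← fderivWithin_of_mem_nhds (mem_interior_iff_mem_nhds.mp hx)]
  exact hC x (interior_subset hx)

theorem IsCompact.exists_bound_fderiv_fderiv_of_contDiffOn (hs : IsCompact s)
    (hs' : UniqueDiffOn ℝ s) (hf : ContDiffOn ℝ 2 f s) :
    ∃ C, ∀ x ∈ interior s, ‖fderiv ℝ (fderiv ℝ f) x‖ ≤ C := by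
  obtain ⟨C, hC⟩ := hs.exists_bound_fderiv_of_contDiffOn hs' (hf.fderivWithin hs' le_rfl)
  refine ⟨C, fun x hx => ?_⟩
  have : fderivWithin ℝ f s =ᶠ[𝓝 x] fderiv ℝ f := by
    filter_upwards [isOpen_interior.mem_nhds hx] with y hy
    exact fderivWithin_of_mem_nhds (mem_interior_iff_mem_nhds.mp hy)
  rw [← this.fderiv_eq]
  exact hC x hx
end

section
variable {E : Type*} [NormedAddCommGroup E] [InnerProductSpace ℝ E]

theorem hasFDerivAt_inv_one_sub_norm_sq_pow (k : ℕ) {x : E} (hx : 1 - ‖x‖ ^ 2 ≠ 0) :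
    HasFDerivAt (fun y : E => ((1 - ‖y‖ ^ 2) ^ k)⁻¹)
      ((2 * k / (1 - ‖x‖ ^ 2) ^ (k + 1)) • innerSL ℝ x) x := by
  refine ((hasDerivAt_inv (pow_ne_zero k hx)).comp_hasFDerivAt x
    (((hasStrictFDerivAt_norm_sq x).hasFDerivAt.const_sub 1).pow k)).congr_fderiv ?_
  ext v
  rcases k with _ | k
  · simp
  · simp only [add_tsub_cancel_right, nsmul_eq_mul, Nat.cast_add, Nat.cast_one, smul_neg, neg_smul,
      neg_neg, smul_apply, coe_innerSL_apply, Nat.cast_ofNat, smul_eq_mul]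
    field_simp
    ring

theorem hasFDerivAt_div_one_sub_norm_sq_pow {h : E → ℝ} {h' : E →L[ℝ] ℝ} (k : ℕ) {x : E}
    (hx : 1 - ‖x‖ ^ 2 ≠ 0) (hh : HasFDerivAt h h' x) :
    HasFDerivAt (fun y => h y / (1 - ‖y‖ ^ 2) ^ k)
      (((1 - ‖x‖ ^ 2) ^ k)⁻¹ • h' + (2 * k * h x / (1 - ‖x‖ ^ 2) ^ (k + 1)) • innerSL ℝ x) x := by
  simp_rw [div_eq_mul_inv]
  refine (hh.mul (hasFDerivAt_inv_one_sub_norm_sq_pow k hx)).congr_fderiv ?_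
  ext v
  simp only [add_apply, smul_apply, coe_innerSL_apply, smul_eq_mul]
  ring

theorem fderiv_fderiv_div_one_sub_norm_sq_pow {h : E → ℝ} (k : ℕ) {x : E}
    (hx : 1 - ‖x‖ ^ 2 ≠ 0) (hh : ContDiffAt ℝ 2 h x) (v : E) :
    fderiv ℝ (fun y => fderiv ℝ (fun z => h z / (1 - ‖z‖ ^ 2) ^ k) y v) x v =
      (fderiv ℝ (fderiv ℝ h) x v v + 4 * k * fderiv ℝ h x v * ⟪x, v⟫ / (1 - ‖x‖ ^ 2)
        + 2 * k * h x * ‖v‖ ^ 2 / (1 - ‖x‖ ^ 2)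
        + 4 * k * (k + 1) * h x * ⟪x, v⟫ ^ 2 / (1 - ‖x‖ ^ 2) ^ 2) / (1 - ‖x‖ ^ 2) ^ k := by
  have hnear : ∀ᶠ y in 𝓝 x, ContDiffAt ℝ 2 h y ∧ 1 - ‖y‖ ^ 2 ≠ 0 :=
    (hh.eventually (by simp)).and
      ((by fun_prop : Continuous fun y : E => 1 - ‖y‖ ^ 2).continuousAt.eventually_ne hx)
  have hfirst : (fun y => fderiv ℝ (fun z => h z / (1 - ‖z‖ ^ 2) ^ k) y v) =ᶠ[𝓝 x]
      fun y => fderiv ℝ h y v * ((1 - ‖y‖ ^ 2) ^ k)⁻¹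
        + 2 * k * h y * ⟪y, v⟫ * ((1 - ‖y‖ ^ 2) ^ (k + 1))⁻¹ := by
    filter_upwards [hnear] with y ⟨hy, hy0⟩
    rw [(hasFDerivAt_div_one_sub_norm_sq_pow k hy0
      (hy.differentiableAt two_ne_zero).hasFDerivAt).fderiv]
    simp only [add_apply, smul_apply, smul_eq_mul, coe_innerSL_apply, real_inner_comm]
    ring
  have hD2h : HasFDerivAt (fderiv ℝ h) (fderiv ℝ (fderiv ℝ h) x) x :=
    ((hh.fderiv_right le_rfl).differentiableAt one_ne_zero).hasFDerivAt
  have hsecond : HasFDerivAt (fun y => fderiv ℝ h y v * ((1 - ‖y‖ ^ 2) ^ k)⁻¹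
        + 2 * k * h y * ⟪y, v⟫ * ((1 - ‖y‖ ^ 2) ^ (k + 1))⁻¹) _ x :=
    ((hD2h.clm_apply (hasFDerivAt_const v x)).mul (hasFDerivAt_inv_one_sub_norm_sq_pow k hx)).add
      ((((hh.differentiableAt two_ne_zero).hasFDerivAt.const_mul (2 * k : ℝ)).mul
        ((hasFDerivAt_id x).inner ℝ (hasFDerivAt_const v x))).mul
        (hasFDerivAt_inv_one_sub_norm_sq_pow (k + 1) hx))
  rw [hfirst.fderiv_eq, hsecond.fderiv]
  simp only [ContinuousLinearMap.comp_zero, zero_add, id_eq, real_inner_comm, Pi.mul_apply,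
    Nat.cast_add, Nat.cast_one, smul_add, add_apply, smul_apply, coe_innerSL_apply, smul_eq_mul,
    ContinuousLinearMap.flip_apply, ContinuousLinearMap.comp_apply, ContinuousLinearMap.prod_apply,
    ContinuousLinearMap.id_apply, zero_apply, fderivInnerCLM_apply, inner_zero_right,
    inner_self_eq_norm_sq_to_K, Real.ringHom_apply]
  field_simp
  ring

theorem le_fderiv_fderiv_div_one_sub_norm_sq_pow {h : E → ℝ} (k : ℕ) {x : E} (hx : ‖x‖ < 1)
    (hh : ContDiffAt ℝ 2 h x) {m C₁ C₂ : ℝ} (hm : 0 < m) (hmh : m ≤ h x)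
    (hC₁ : ‖fderiv ℝ h x‖ ≤ C₁) (hC₂ : ‖fderiv ℝ (fderiv ℝ h) x‖ ≤ C₂) (v : E) :
    (2 * k * m / (1 - ‖x‖ ^ 2) - (C₂ + k * C₁ ^ 2 / ((k + 1) * m))) * ‖v‖ ^ 2
        / (1 - ‖x‖ ^ 2) ^ k ≤
      fderiv ℝ (fun y => fderiv ℝ (fun z => h z / (1 - ‖z‖ ^ 2) ^ k) y v) x v := by
  have hp : 0 < 1 - ‖x‖ ^ 2 := by nlinarith [norm_nonneg x]
  have hD2 : |fderiv ℝ (fderiv ℝ h) x v v| ≤ C₂ * ‖v‖ ^ 2 := by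
    rw [← Real.norm_eq_abs]
    calc _ ≤ ‖fderiv ℝ (fderiv ℝ h) x‖ * ‖v‖ * ‖v‖ := ContinuousLinearMap.le_opNorm₂ ..
      _ ≤ C₂ * ‖v‖ * ‖v‖ := by gcongr
      _ = C₂ * ‖v‖ ^ 2 := by ring
  have hD : |fderiv ℝ h x v| ≤ C₁ * ‖v‖ := by
    rw [← Real.norm_eq_abs]
    exact (ContinuousLinearMap.le_opNorm ..).trans (by gcongr)
  rw [fderiv_fderiv_div_one_sub_norm_sq_pow k hp.ne' hh]
  gcongr
  exact le_add_div_add_div_add_div_sq (Nat.cast_nonneg k) hp hm hmh hD2 hD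

end

/-- If `h` is `C²` and strictly positive on the closed unit ball of `ℝⁿ` and
`w = h / (1 − ‖x‖²)^k`, then the least eigenvalue of the Hessian of `w` tends to `+∞`
at the boundary of the ball. -/
theorem hessian_blowup_near_boundary {n : ℕ} (h : EuclideanSpace ℝ (Fin n) → ℝ)
    (k : ℕ) (hk : 1 ≤ k)
    (hC2 : ContDiffOn ℝ 2 h (Metric.closedBall 0 1))
    (hpos : ∀ x : EuclideanSpace ℝ (Fin n), ‖x‖ ≤ 1 → 0 < h x) :
    ∀ M : ℝ, 0 < M → ∃ δ : ℝ, 0 < δ ∧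
      ∀ x : EuclideanSpace ℝ (Fin n), ‖x‖ < 1 → 1 - δ < ‖x‖ →
        ∀ v : EuclideanSpace ℝ (Fin n),
          M * ‖v‖ ^ 2 ≤
            fderiv ℝ (fun y => fderiv ℝ (fun x' => h x' / (1 - ‖x'‖ ^ 2) ^ k) y v) x v := by
  have hball : IsCompact (closedBall (0 : EuclideanSpace ℝ (Fin n)) 1) := isCompact_closedBall 0 1
  have hint : interior (closedBall (0 : EuclideanSpace ℝ (Fin n)) 1) = ball 0 1 :=
    interior_closedBall 0 one_ne_zero
  have huniq : UniqueDiffOn ℝ (closedBall (0 : EuclideanSpace ℝ (Fin n)) 1) :=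
    uniqueDiffOn_convex (convex_closedBall 0 1) (by simp [hint])
  obtain ⟨x₀, hx₀, hmin⟩ := hball.exists_isMinOn ⟨0, by simp⟩ hC2.continuousOn
  have hm : 0 < h x₀ := hpos x₀ (mem_closedBall_zero_iff.mp hx₀)
  obtain ⟨C₁, hC₁⟩ := hball.exists_bound_fderiv_of_contDiffOn huniq (hC2.of_le one_le_two)
  obtain ⟨C₂, hC₂⟩ := hball.exists_bound_fderiv_fderiv_of_contDiffOn huniq hC2
  rw [hint] at hC₁ hC₂
  have hC₂0 : 0 ≤ C₂ := (norm_nonneg (fderiv ℝ (fderiv ℝ h) 0)).trans (hC₂ 0 (by simp))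
  intro M hM
  obtain ⟨δ, hδ, hδM⟩ := exists_pos_forall_le_div_one_sub_sq_pow
    (C := C₂ + k * C₁ ^ 2 / ((k + 1) * h x₀)) (by positivity : 0 < 2 * k * h x₀) (by positivity)
    hM k
  refine ⟨δ, hδ, fun x hx hδx v => ?_⟩
  have hxb : x ∈ ball 0 1 := mem_ball_zero_iff.mpr hx
  calc M * ‖v‖ ^ 2
      ≤ (2 * k * h x₀ / (1 - ‖x‖ ^ 2) - (C₂ + k * C₁ ^ 2 / ((k + 1) * h x₀)))
          / (1 - ‖x‖ ^ 2) ^ k * ‖v‖ ^ 2 := by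
        gcongr; exact hδM ‖x‖ (norm_nonneg x) hx hδx
    _ = _ := by ring
    _ ≤ _ := le_fderiv_fderiv_div_one_sub_norm_sq_pow k hx
        (hC2.contDiffAt (closedBall_mem_nhds_of_mem hxb)) hm (hmin (ball_subset_closedBall hxb))
        (hC₁ x hxb) (hC₂ x hxb) v
end

section
/- Let k ≥ 1 and let g(z) = 1 + g₂z² + g₃z³ + ⋯ + g_k z^k be a polynomial in one complex variable with constant term 1 and no linear term (coefficient of z equal to 0), of degree at most k, having no zeros on the closed unit disc {z ∈ ℂ : |z| ≤ 1}. Then |g₂| < k/2, where g₂ is the coefficient of z². -/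
/-!
Since `g(0) = 1`, `g` factors as `∏ᵢ (1 - aᵢ z)` where the `aᵢ` are the inverses of its roots;
there are at most `k` of them and `|aᵢ| < 1` because the roots lie outside the closed disc.
The vanishing linear coefficient says `∑ aᵢ = 0`, so `2 g₂ = (∑ aᵢ)² - ∑ aᵢ² = -∑ aᵢ²`,
whose modulus is less than `k`.
-/

open Polynomial

namespace Polynomial

section OneSubCMulX

variable {R : Type*} [CommRing R]

theorem coeff_zero_one_sub_C_mul_X_mul (a : R) (q : R[X]) :
    ((1 - C a * X) * q).coeff 0 = q.coeff 0 := by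
  simp

theorem coeff_succ_one_sub_C_mul_X_mul (a : R) (q : R[X]) (n : ℕ) :
    ((1 - C a * X) * q).coeff (n + 1) = q.coeff (n + 1) - a * q.coeff n := by
  rw [sub_mul, one_mul, coeff_sub, mul_assoc, coeff_C_mul, coeff_X_mul]

theorem coeff_zero_prod_one_sub_C_mul_X (t : Multiset R) :
    (t.map fun a => 1 - C a * X).prod.coeff 0 = 1 := by
  induction t using Multiset.induction with
  | empty => simp
  | cons a t ih => simp only [Multiset.map_cons, Multiset.prod_cons,
      coeff_zero_one_sub_C_mul_X_mul, ih]

theorem coeff_one_prod_one_sub_C_mul_X (t : Multiset R) :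
    (t.map fun a => 1 - C a * X).prod.coeff 1 = -t.sum := by
  induction t using Multiset.induction with
  | empty => simp [coeff_one]
  | cons a t ih =>
    simp only [Multiset.map_cons, Multiset.prod_cons, Multiset.sum_cons]
    rw [coeff_succ_one_sub_C_mul_X_mul, ih, coeff_zero_prod_one_sub_C_mul_X]
    ring

theorem two_mul_coeff_two_prod_one_sub_C_mul_X (t : Multiset R) :
    2 * (t.map fun a => 1 - C a * X).prod.coeff 2 = t.sum ^ 2 - (t.map (· ^ 2)).sum := by
  induction t using Multiset.induction with
  | empty => simp [coeff_one]
  | cons a t ih =>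
    simp only [Multiset.map_cons, Multiset.prod_cons, Multiset.sum_cons]
    rw [coeff_succ_one_sub_C_mul_X_mul, mul_sub, ih, coeff_one_prod_one_sub_C_mul_X]
    ring

end OneSubCMulX

theorem X_sub_C_eq_C_neg_mul_one_sub_C_inv_mul_X {K : Type*} [Field K] {r : K} (hr : r ≠ 0) :
    X - C r = C (-r) * (1 - C r⁻¹ * X) := by
  rw [mul_sub, mul_one, ← mul_assoc, ← C_mul, neg_mul, mul_inv_cancel₀ hr, C_neg, C_neg, C_1]
  ring

theorem Splits.eq_prod_one_sub_C_inv_roots_mul_X {K : Type*} [Field K] {g : K[X]}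
    (hg : g.Splits) (h0 : g.coeff 0 = 1) :
    g = ((g.roots.map (·⁻¹)).map fun a => 1 - C a * X).prod := by
  have hroots : ∀ r ∈ g.roots, r ≠ 0 := by
    rintro r hr rfl
    have h := isRoot_of_mem_roots hr
    rw [IsRoot, ← coeff_zero_eq_eval_zero, h0] at h
    exact one_ne_zero h
  set Q := ((g.roots.map (·⁻¹)).map fun a => 1 - C a * X).prod with hQ
  have hfac : g = C (g.leadingCoeff * (g.roots.map (-·)).prod) * Q := by
    conv_lhs => rw [hg.eq_prod_roots]
    rw [Multiset.map_congr rfl fun r hr => X_sub_C_eq_C_neg_mul_one_sub_C_inv_mul_X (hroots r hr),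
      Multiset.prod_map_mul, C_mul, map_multiset_prod, Multiset.map_map, mul_assoc, hQ,
      Multiset.map_map]
    rfl
  have hc : g.leadingCoeff * (g.roots.map (-·)).prod = 1 := by
    rw [← h0, hfac, coeff_C_mul, coeff_zero_prod_one_sub_C_mul_X, mul_one, ← hfac]
  rwa [hc, C_1, one_mul] at hfac

theorem norm_inv_lt_one_of_mem_roots {K : Type*} [NormedField K] {g : K[X]}
    (hz : ∀ z : K, ‖z‖ ≤ 1 → g.eval z ≠ 0) {r : K} (hr : r ∈ g.roots) : ‖r⁻¹‖ < 1 := by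
  rw [norm_inv]
  exact inv_lt_one_of_one_lt₀ (lt_of_not_ge fun h => hz r h (isRoot_of_mem_roots hr))

end Polynomial

theorem Multiset.norm_sum_lt_of_card_le {E : Type*} [SeminormedAddCommGroup E] {t : Multiset E}
    {n : ℕ} (hn : 0 < n) (hcard : t.card ≤ n) (hlt : ∀ a ∈ t, ‖a‖ < 1) : ‖t.sum‖ < n := by
  rcases eq_or_ne t 0 with rfl | ht
  · simpa using hn
  obtain ⟨a, ha⟩ := Multiset.exists_mem_of_ne_zero ht
  calc ‖t.sum‖ ≤ (t.map (‖·‖)).sum := norm_multiset_sum_le t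
    _ < (t.map fun _ => (1 : ℝ)).sum :=
      Multiset.sum_lt_sum (fun b hb => (hlt b hb).le) ⟨a, ha, hlt a ha⟩
    _ = t.card := by simp
    _ ≤ n := by exact_mod_cast hcard

/-- If `g(z) = 1 + g₂ z² + ⋯ + g_k z^k` is a polynomial with no zeros on the closed unit
disc, then `|g₂| < k/2`. -/
theorem coeff_two_bound (k : ℕ) (hk : 1 ≤ k) (g : Polynomial ℂ)
    (h0 : g.coeff 0 = 1) (h1 : g.coeff 1 = 0) (hdeg : g.natDegree ≤ k)
    (hz : ∀ z : ℂ, ‖z‖ ≤ 1 → g.eval z ≠ 0) :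
    ‖g.coeff 2‖ < (k : ℝ) / 2 := by
  have hg := IsAlgClosed.splits g
  set t := g.roots.map (·⁻¹) with ht
  have hprod : g = (t.map fun a => 1 - C a * X).prod := hg.eq_prod_one_sub_C_inv_roots_mul_X h0
  have hsum : t.sum = 0 := by
    rw [← neg_eq_zero, ← coeff_one_prod_one_sub_C_mul_X, ← hprod, h1]
  have htwo : 2 * ‖g.coeff 2‖ = ‖(t.map (· ^ 2)).sum‖ := by
    rw [← Complex.norm_two, ← norm_mul, hprod, two_mul_coeff_two_prod_one_sub_C_mul_X, hsum,
      zero_pow two_ne_zero, zero_sub, norm_neg]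
  have hcard : (t.map (· ^ 2)).card ≤ k := by
    simpa [ht, ← hg.natDegree_eq_card_roots] using hdeg
  have hsmall : ∀ a ∈ t.map (· ^ 2), ‖a‖ < 1 := by
    simp only [ht, Multiset.map_map, Multiset.mem_map, Function.comp_apply]
    rintro _ ⟨r, hr, rfl⟩
    rw [norm_pow]
    exact pow_lt_one₀ (norm_nonneg _) (norm_inv_lt_one_of_mem_roots hz hr) two_ne_zero
  linarith [Multiset.norm_sum_lt_of_card_le hk hcard hsmall]
end

section
/- For every n ≥ 1 there exist an integer N (depending only on n; one may take N + 1 equal to the dimension of the space of polynomials of degree at most 3 in n variables) and a real number ε > 0 such that whenever 0 ≤ σ₁ ≤ σ₂ ≤ ⋯ ≤ σₙ < ε, there exists a polynomial map p : ℂⁿ → ℂᴺ of degree at most 3 with p(0) = 0 such that z ↦ p(z)/(1 + Σ_{k=1}^n σ_k z_k²) is a rational proper map of balls from 𝔹_n to 𝔹_N written in lowest terms. -/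
open Metric MvPolynomial
open scoped InnerProductSpace ComplexOrder

noncomputable section

/-!
With `q = Σ σ_k z_k²` and `s = ‖z‖²`, take as components of the numerator
`z_j (a + b_k z_k²)` and `c_jk z_j z_k` for all `j, k`, together with `q` itself, where
`n a² = 1/2`, `a b_k = σ_k` and `c_jk² = 1/2 - δ_jk b_k²`; such real coefficients exist once
`4 n σ_k² ≤ 1`. Expanding,
`|1 + q|² - Σ |p_i|² = (1 - s) (1 + s/2 + 2 Re q + Σ b_k² |z_k|⁴)`,
and the second factor is positive for `s < 2` because `|σ_k| ≤ 1/2`. A common factor of `1 + q`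
and the components divides `(1 + q) - q = 1`. There are `2n² + 1` components, which fit, padded
by zeros, into `N = C(n+3, 3) - 1` slots.
-/

namespace CubicBallMap

open Complex

variable {n : ℕ} {σ : Fin n → ℝ}

theorem sum_normSq_eq_norm_sq (z : Cn n) : ∑ i, normSq (z i) = ‖z‖ ^ 2 := by
  simp [EuclideanSpace.norm_sq_eq, normSq_eq_norm_sq]

def quadForm (σ : Fin n → ℝ) : MvPolynomial (Fin n) ℂ :=
  ∑ k, C (σ k : ℂ) * X k ^ 2

theorem eval_quadForm (σ : Fin n → ℝ) (v : Fin n → ℂ) :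
    eval v (quadForm σ) = ∑ k, (σ k : ℂ) * v k ^ 2 := by
  simp [quadForm]

theorem re_eval_quadForm (σ : Fin n → ℝ) (v : Fin n → ℂ) :
    (eval v (quadForm σ)).re = ∑ k, σ k * (v k ^ 2).re := by
  simp only [eval_quadForm, re_sum, re_ofReal_mul]

theorem totalDegree_quadForm_le (σ : Fin n → ℝ) : (quadForm σ).totalDegree ≤ 2 := by
  refine totalDegree_finsetSum_le fun k _ => ?_
  grw [totalDegree_mul]
  simp [totalDegree_X_pow]

theorem neg_re_eval_quadForm_le (hσ : ∀ k, |σ k| ≤ 1 / 2) (v : Fin n → ℂ) :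
    -(eval v (quadForm σ)).re ≤ (∑ k, normSq (v k)) / 2 := by
  rw [re_eval_quadForm, ← Finset.sum_neg_distrib, Finset.sum_div]
  refine Finset.sum_le_sum fun k _ => ?_
  have hre : |(v k ^ 2).re| ≤ normSq (v k) :=
    (abs_re_le_norm _).trans_eq (by rw [norm_pow, normSq_eq_norm_sq])
  calc -(σ k * (v k ^ 2).re) ≤ |σ k| * |(v k ^ 2).re| := (neg_le_abs _).trans_eq (abs_mul _ _)
    _ ≤ 1 / 2 * normSq (v k) := mul_le_mul (hσ k) hre (abs_nonneg _) (by norm_num)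
    _ = normSq (v k) / 2 := by ring

structure Coeffs (σ : Fin n → ℝ) where
  a : ℝ
  b : Fin n → ℝ
  c : Fin n → Fin n → ℝ
  card_mul_a_sq : n * a ^ 2 = 1 / 2
  a_mul_b : ∀ k, a * b k = σ k
  c_sq : ∀ j k, c j k ^ 2 = 1 / 2 - if j = k then b k ^ 2 else 0

abbrev Index (n : ℕ) : Type := (Fin n × Fin n) ⊕ (Fin n × Fin n) ⊕ Unit

namespace Coeffs

def numerator (κ : Coeffs σ) : Index n → MvPolynomial (Fin n) ℂ
  | .inl (j, k) => X j * (C (κ.a : ℂ) + C (κ.b k : ℂ) * X k ^ 2)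
  | .inr (.inl (j, k)) => C (κ.c j k : ℂ) * X j * X k
  | .inr (.inr ()) => quadForm σ

def cofactor (κ : Coeffs σ) (v : Fin n → ℂ) : ℝ :=
  1 + (∑ k, normSq (v k)) / 2 + 2 * (eval v (quadForm σ)).re
    + ∑ k, κ.b k ^ 2 * normSq (v k) ^ 2

theorem totalDegree_numerator_le (κ : Coeffs σ) (i : Index n) :
    (κ.numerator i).totalDegree ≤ 3 := by
  rcases i with ⟨j, k⟩ | ⟨j, k⟩ | ⟨⟩
  · grw [numerator, totalDegree_mul, totalDegree_add, totalDegree_mul]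
    simp [totalDegree_X, totalDegree_X_pow]
  · grw [numerator, totalDegree_mul, totalDegree_mul]
    simp [totalDegree_X]
  · exact (totalDegree_quadForm_le σ).trans (by norm_num)

theorem constantCoeff_numerator (κ : Coeffs σ) (i : Index n) :
    constantCoeff (κ.numerator i) = 0 := by
  rcases i with ⟨j, k⟩ | ⟨j, k⟩ | ⟨⟩ <;> simp [numerator, quadForm]

theorem sum_normSq_eval_numerator (κ : Coeffs σ) (v : Fin n → ℂ) :
    ∑ i, normSq (eval v (κ.numerator i)) =
      (∑ k, normSq (v k)) * (1 / 2 + 2 * (eval v (quadForm σ)).re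
          + ∑ k, κ.b k ^ 2 * normSq (v k) ^ 2)
        + ((∑ k, normSq (v k)) ^ 2 / 2 - ∑ k, κ.b k ^ 2 * normSq (v k) ^ 2)
        + normSq (eval v (quadForm σ)) := by
  have hlinear : ∀ k, normSq (κ.a + κ.b k * v k ^ 2)
      = κ.a ^ 2 + 2 * σ k * (v k ^ 2).re + κ.b k ^ 2 * normSq (v k) ^ 2 := by
    intro k
    simp only [normSq_apply, add_re, add_im, ofReal_re, ofReal_im,
      ← κ.a_mul_b k, pow_two, mul_re, mul_im]
    ring
  have hquad : ∀ j k : Fin n, normSq (κ.c j k * v j * v k)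
      = (1 / 2 - if j = k then κ.b k ^ 2 else 0) * (normSq (v j) * normSq (v k)) := by
    intro j k
    rw [normSq_mul, normSq_mul, normSq_ofReal, ← κ.c_sq, pow_two]
    ring
  have hfirst : ∑ j, ∑ k, normSq (v j) *
        (κ.a ^ 2 + 2 * σ k * (v k ^ 2).re + κ.b k ^ 2 * normSq (v k) ^ 2)
      = (∑ k, normSq (v k)) * (1 / 2 + 2 * (eval v (quadForm σ)).re
          + ∑ k, κ.b k ^ 2 * normSq (v k) ^ 2) := by
    rw [← Finset.sum_mul_sum, Finset.sum_add_distrib, Finset.sum_add_distrib, Finset.sum_const,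
      Finset.card_univ, Fintype.card_fin, nsmul_eq_mul, κ.card_mul_a_sq, re_eval_quadForm,
      Finset.mul_sum]
    simp only [mul_assoc]
  have hsecond : ∑ j, ∑ k,
        (1 / 2 - if j = k then κ.b k ^ 2 else 0) * (normSq (v j) * normSq (v k))
      = (∑ k, normSq (v k)) ^ 2 / 2 - ∑ k, κ.b k ^ 2 * normSq (v k) ^ 2 := by
    simp only [sub_mul, ite_mul, zero_mul, Finset.sum_sub_distrib, Finset.sum_ite_eq,
      Finset.mem_univ, if_true, ← Finset.mul_sum, ← Finset.sum_mul, ← pow_two]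
    ring
  simp only [Fintype.sum_sum_type, Fintype.sum_prod_type, numerator, map_mul, map_add, eval_C,
    eval_X, map_pow, hlinear, hquad, Fintype.sum_unique, hfirst, hsecond]
  ring

theorem normSq_eval_sub_sum_eq (κ : Coeffs σ) (v : Fin n → ℂ) :
    normSq (eval v (1 + quadForm σ)) - ∑ i, normSq (eval v (κ.numerator i))
      = (1 - ∑ k, normSq (v k)) * κ.cofactor v := by
  rw [κ.sum_normSq_eval_numerator, map_add, map_one, normSq_add, normSq_one, one_mul, conj_re,
    cofactor]
  ring

theorem abs_le_half (κ : Coeffs σ) (k : Fin n) : |σ k| ≤ 1 / 2 := by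
  have hn : (1 : ℝ) ≤ n := by
    have : n ≠ 0 := by
      rintro rfl
      simpa using κ.card_mul_a_sq
    exact_mod_cast Nat.one_le_iff_ne_zero.2 this
  have hb : κ.b k ^ 2 ≤ 1 / 2 := by
    have := κ.c_sq k k
    simp only [if_true] at this
    nlinarith [sq_nonneg (κ.c k k)]
  have ha : κ.a ^ 2 ≤ 1 / 2 := by nlinarith [κ.card_mul_a_sq, sq_nonneg κ.a]
  have hσ : σ k ^ 2 ≤ (1 / 2) ^ 2 := by
    rw [← κ.a_mul_b k, mul_pow]
    nlinarith [sq_nonneg κ.a, sq_nonneg (κ.b k)]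
  exact abs_le_of_sq_le_sq hσ (by norm_num)

theorem cofactor_pos (κ : Coeffs σ) {v : Fin n → ℂ} (hv : ∑ k, normSq (v k) < 2) :
    0 < κ.cofactor v := by
  have hre := neg_re_eval_quadForm_le κ.abs_le_half v
  have hB : 0 ≤ ∑ k, κ.b k ^ 2 * normSq (v k) ^ 2 :=
    Finset.sum_nonneg fun k _ => by positivity
  rw [cofactor]
  linarith

theorem sum_normSq_evalPoly_lt (κ : Coeffs σ) {z : Cn n} (hz : ‖z‖ < 1) :
    ∑ i, normSq (evalPoly (κ.numerator i) z) < normSq (evalPoly (1 + quadForm σ) z) := by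
  have hs : ∑ k, normSq (z k) < 1 := by
    rw [sum_normSq_eq_norm_sq]
    nlinarith [norm_nonneg z]
  have hpos := κ.cofactor_pos (hs.trans one_lt_two)
  have := κ.normSq_eval_sub_sum_eq (fun i => z i)
  unfold evalPoly
  nlinarith

theorem normSq_evalPoly_sub_sum_eq_zero (κ : Coeffs σ) {z : Cn n} (hz : ‖z‖ = 1) :
    normSq (evalPoly (1 + quadForm σ) z) - ∑ i, normSq (evalPoly (κ.numerator i) z) = 0 := by
  have hs : ∑ k, normSq (z k) = 1 := by rw [sum_normSq_eq_norm_sq, hz, one_pow]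
  have := κ.normSq_eval_sub_sum_eq (fun i => z i)
  rwa [hs, sub_self, zero_mul] at this

end Coeffs

theorem nonempty_coeffs (hn : n ≠ 0) (hσ : ∀ k, 4 * n * σ k ^ 2 ≤ 1) :
    Nonempty (Coeffs σ) := by
  have hn' : (0 : ℝ) < n := by positivity
  have hr : 0 < √(2 * n) := Real.sqrt_pos.2 (by positivity)
  have hr2 : √(2 * n) ^ 2 = 2 * n := Real.sq_sqrt (by positivity)
  refine ⟨⟨(√(2 * n))⁻¹, fun k => √(2 * n) * σ k,
    fun j k => √(1 / 2 - if j = k then (√(2 * n) * σ k) ^ 2 else 0), ?_, ?_, ?_⟩⟩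
  · rw [inv_pow, hr2]
    field_simp
  · intro k
    field_simp
  · intro j k
    refine Real.sq_sqrt ?_
    split_ifs
    · rw [mul_pow, hr2]
      linarith [hσ k]
    · norm_num

theorem card_index_add_one_le (hn : 1 ≤ n) : Fintype.card (Index n) + 1 ≤ (n + 3).choose 3 := by
  have hcard : Fintype.card (Index n) = 2 * n ^ 2 + 1 := by
    simp only [Fintype.card_sum, Fintype.card_prod, Fintype.card_fin, Fintype.card_unit]
    ring
  have hchoose : (n + 3).choose 3 * 6 = (n + 1) * (n + 2) * (n + 3) := by
    have h3 : (n + 3) * (n + 2).choose 2 = (n + 3).choose 3 * 3 :=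
      Nat.add_one_mul_choose_eq (n + 2) 2
    have h2 : (n + 2) * (n + 1) = (n + 2).choose 2 * 2 := by
      simpa using Nat.add_one_mul_choose_eq (n + 1) 1
    nlinarith
  rw [hcard]
  rcases le_or_gt n 3 with hn3 | hn3
  · interval_cases n <;> decide
  · -- `(n + 1) (n + 2) (n + 3) - 12 (n² + 1) = (n - 1) (n - 2) (n - 3)`
    obtain ⟨k, rfl⟩ := Nat.exists_eq_add_of_le hn3
    nlinarith [Nat.zero_le (k * (k + 1) * (k + 2))]

theorem exists_sum_fin_equiv {ι : Type*} [Fintype ι] {N : ℕ} (h : Fintype.card ι ≤ N) :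
    ∃ r, Nonempty (ι ⊕ Fin r ≃ Fin N) := by
  refine ⟨N - Fintype.card ι, ⟨Fintype.equivFinOfCardEq ?_⟩⟩
  rw [Fintype.card_sum, Fintype.card_fin]
  omega

theorem sqNormP_sum_elim_zero {ι : Type*} [Fintype ι] {r N : ℕ} (e : ι ⊕ Fin r ≃ Fin N)
    (f : ι → MvPolynomial (Fin n) ℂ) (z : Cn n) :
    sqNormP (fun m => Sum.elim f 0 (e.symm m)) z = ∑ i, normSq (evalPoly (f i) z) := by
  rw [sqNormP, e.symm.sum_comp (fun x => normSq (evalPoly (Sum.elim f 0 x) z))]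
  simp [evalPoly]

end CubicBallMap

open CubicBallMap in
/-- For all small enough `σ₁ ≤ ⋯ ≤ σₙ`, the polynomial `1 + Σ σ_k z_k²` is the denominator of
a degree-(at most)-3 rational proper map of balls, written in lowest terms, taking the origin
to the origin.  One may take `N + 1` to be the dimension of the space of polynomials of degree
at most `3` in `n` variables. -/
theorem exists_cubic_numerator (n : ℕ) (hn : 1 ≤ n) :
    ∃ (N : ℕ) (ε : ℝ), 0 < ε ∧ N + 1 = Nat.choose (n + 3) 3 ∧
      ∀ σ : Fin n → ℝ, Monotone σ → (∀ k, 0 ≤ σ k) → (∀ k, σ k < ε) →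
        ∃ p : Fin N → MvPolynomial (Fin n) ℂ,
          (∀ j, (p j).totalDegree ≤ 3) ∧
          (∀ j, MvPolynomial.constantCoeff (p j) = 0) ∧
          (∀ h : MvPolynomial (Fin n) ℂ,
            h ∣ (1 + ∑ k : Fin n, MvPolynomial.C ((σ k : ℂ)) * (MvPolynomial.X k) ^ 2) →
            (∀ j, h ∣ p j) → IsUnit h) ∧
          (∀ z : Cn n, ‖z‖ < 1 →
            evalPoly (1 + ∑ k : Fin n, MvPolynomial.C ((σ k : ℂ)) * (MvPolynomial.X k) ^ 2) z
              ≠ 0) ∧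
          (∀ z : Cn n, ‖z‖ < 1 → sqNormP p z < Complex.normSq
            (evalPoly (1 + ∑ k : Fin n, MvPolynomial.C ((σ k : ℂ)) * (MvPolynomial.X k) ^ 2)
              z)) ∧
          (∀ z : Cn n, ‖z‖ = 1 → Complex.normSq
            (evalPoly (1 + ∑ k : Fin n, MvPolynomial.C ((σ k : ℂ)) * (MvPolynomial.X k) ^ 2)
              z) - sqNormP p z = 0) := by
  have hcard := card_index_add_one_le hn
  refine ⟨(n + 3).choose 3 - 1, 1 / (2 * n), by positivity, by omega, fun σ _ hσ0 hσε => ?_⟩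
  have hσ (k : Fin n) : 4 * n * σ k ^ 2 ≤ 1 := by
    have h2nσ := (lt_div_iff₀ (by positivity)).1 (hσε k)
    have hn' : (1 : ℝ) ≤ n := by exact_mod_cast hn
    nlinarith [hσ0 k]
  obtain ⟨κ⟩ := nonempty_coeffs (by omega) hσ
  obtain ⟨r, ⟨e⟩⟩ :=
    exists_sum_fin_equiv (ι := Index n) (N := (n + 3).choose 3 - 1) (by omega)
  set p := fun m => Sum.elim κ.numerator 0 (e.symm m)
  have maps_in (z : Cn n) (hz : ‖z‖ < 1) :
      sqNormP p z < Complex.normSq (evalPoly (1 + quadForm σ) z) := by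
    rw [sqNormP_sum_elim_zero]
    exact κ.sum_normSq_evalPoly_lt hz
  have padded (P : MvPolynomial (Fin n) ℂ → Prop) (h0 : P 0) (hf : ∀ i, P (κ.numerator i))
      (j : Fin _) : P (p j) :=
    (Sum.forall (p := fun x => P (Sum.elim κ.numerator 0 x))).2 ⟨hf, fun _ => h0⟩ (e.symm j)
  refine ⟨p, padded (·.totalDegree ≤ 3) (by simp) κ.totalDegree_numerator_le,
    padded (constantCoeff · = 0) (by simp) κ.constantCoeff_numerator, fun h hg hp => ?_,
    fun z hz h0 => ?_, maps_in, fun z hz => by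
      rw [sqNormP_sum_elim_zero]; exact κ.normSq_evalPoly_sub_sum_eq_zero hz⟩
  · -- the component `q` makes the fraction reduced: a common factor divides `(1 + q) - q`
    have hq : h ∣ quadForm σ := by
      simpa [p, Coeffs.numerator] using hp (e (.inl (.inr (.inr ()))))
    exact isUnit_of_dvd_one ((dvd_add_left hq).1 hg)
  · have := maps_in z hz
    rw [show evalPoly (1 + quadForm σ) z = 0 from h0, map_zero] at this
    exact (Finset.sum_nonneg fun _ _ => Complex.normSq_nonneg _).not_gt this
end
end

section
/- Let f = p/g : 𝔹_n → 𝔹_N be a rational proper map of balls of degree d written in lowest terms with g(0) = 1 and maximal embedding dimension for degree d, i.e., the functions p₁, …, p_N, g are linearly independent over ℂ and N + 1 equals the dimension of the space of polynomials of degree at most d in n variables (N + 1 = binom(n+d, d)). Let r(z,z̄) = |g(z)|² − ‖p(z)‖². Then at least one of the following holds: (i) there exist γ > 0 and a polynomial map P : ℂⁿ → ℂᴺ with r(z,z̄) = γ(1 − ‖P(z)‖²) for all z (so a linear fractional change of target makes f a polynomial proper map to 𝔹_N); (ii) there exist γ > 0, a polynomial G : ℂⁿ → ℂ, and a polynomial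 map P : ℂⁿ → ℂᴺ⁻¹ with r(z,z̄) = γ(|G(z)|² − 1 − ‖P(z)‖²) for all z (so f is polynomial into the generalized ball 𝔹_{1,N−1}); (iii) there exist a polynomial G : ℂⁿ → ℂ and a polynomial map P : ℂⁿ → ℂᴺ⁻¹ with r(z,z̄) = Re G(z) − ‖P(z)‖² for all z (so f is polynomial into the Heisenberg model ℍ_N of the ball). -/
open Metric MvPolynomial
open scoped InnerProductSpace ComplexOrder

noncomputable section

/-!
Since `p₁, …, p_N, g` is a basis of the polynomials of degree at most `d`, the constant `1` is a
combination `∑ cⱼ pⱼ + a g = 1`. If `c = 0` then `g` is a nonzero constant and `f` is already a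
polynomial map into the ball. Otherwise, decomposing `ℂᴺ` into the line through `c̄` and its
orthogonal complement gives `‖p‖² = |1 - a g|² / ‖c‖² + ‖Q‖²` for a polynomial map `Q` into
`ℂᴺ⁻¹`, so that `r = |g|² - |1 - a g|² / ‖c‖² - ‖Q‖²`. Completing the square in `g`, the sign of
`‖c‖² - |a|²` decides between the ball, the generalized ball and the Heisenberg model.
-/

def Fin.consSumLeEquiv (n d : ℕ) :
    {f : Fin n → ℕ // ∑ i, f i ≤ d} ≃ {P : Fin (n + 1) → ℕ // ∑ i, P i = d} where
  toFun f := ⟨Fin.cons (d - ∑ i, f.1 i) f.1, by rw [Fin.sum_cons]; have := f.2; omega⟩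
  invFun P := ⟨Fin.tail P.1, by
    have := P.2
    rw [Fin.sum_univ_succ] at this
    simp only [Fin.tail]
    omega⟩
  left_inv f := by simp
  right_inv P := by
    ext i
    refine Fin.cases ?_ (fun _ => rfl) i
    have := P.2
    rw [Fin.sum_univ_succ] at this
    simp only [Fin.cons_zero, Fin.tail]
    omega

theorem Finsupp.natCard_sum_le_eq_choose (n d : ℕ) :
    Nat.card {s : Fin n →₀ ℕ // (s.sum fun _ e => e) ≤ d} = (n + d).choose d := by
  have e : {s : Fin n →₀ ℕ // (s.sum fun _ e => e) ≤ d} ≃ Sym (Fin (n + 1)) d :=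
    (Finsupp.equivFunOnFinite.subtypeEquiv fun s => by simp [Finsupp.sum_fintype]).trans
      ((Fin.consSumLeEquiv n d).trans (Sym.equivNatSumOfFintype _ d).symm)
  rw [Nat.card_congr e, Sym.natCard_sym_eq_choose, Nat.card_eq_fintype_card, Fintype.card_fin,
    Nat.add_right_comm, Nat.add_sub_cancel]

namespace MvPolynomial

theorem finrank_restrictTotalDegree (K : Type*) [Field K] (n d : ℕ) :
    Module.finrank K (restrictTotalDegree (Fin n) K d) = (n + d).choose d := by
  rw [restrictTotalDegree, Module.finrank_eq_nat_card_basis (basisRestrictSupport K _)]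
  exact Finsupp.natCard_sum_le_eq_choose n d

variable {K ι : Type*} [Field K] [Fintype ι] {n d : ℕ} {v : ι → MvPolynomial (Fin n) K}

theorem span_eq_restrictTotalDegree (hdeg : ∀ i, (v i).totalDegree ≤ d)
    (hli : LinearIndependent K v) (hcard : Fintype.card ι = (n + d).choose d) :
    Submodule.span K (Set.range v) = restrictTotalDegree (Fin n) K d := by
  refine Submodule.eq_of_le_of_finrank_eq ?_ ?_
  · exact Submodule.span_le.mpr <| Set.range_subset_iff.mpr fun i =>
      (mem_restrictTotalDegree _ _ _).mpr (hdeg i)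
  · rw [finrank_span_eq_card hli, finrank_restrictTotalDegree, hcard]

theorem exists_sum_smul_eq_one (hdeg : ∀ i, (v i).totalDegree ≤ d)
    (hli : LinearIndependent K v) (hcard : Fintype.card ι = (n + d).choose d) :
    ∃ c : ι → K, ∑ i, c i • v i = 1 := by
  have h1 : (1 : MvPolynomial (Fin n) K) ∈ Submodule.span K (Set.range v) := by
    rw [span_eq_restrictTotalDegree hdeg hli hcard, mem_restrictTotalDegree, totalDegree_one]
    exact Nat.zero_le d
  exact (Submodule.mem_span_range_iff_exists_fun K).mp h1

end MvPolynomial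

theorem exists_sq_norm_eq_sq_norm_inner_add_sum {𝕜 E : Type*} [RCLike 𝕜]
    [NormedAddCommGroup E] [InnerProductSpace 𝕜 E] {M : ℕ} (hE : Module.finrank 𝕜 E = M + 1)
    {u : E} (hu : ‖u‖ = 1) :
    ∃ v : Fin M → E, ∀ x : E, ‖x‖ ^ 2 = ‖⟪u, x⟫_𝕜‖ ^ 2 + ∑ k, ‖⟪v k, x⟫_𝕜‖ ^ 2 := by
  have : FiniteDimensional 𝕜 E := Module.finite_of_finrank_eq_succ hE
  have horth : Orthonormal 𝕜 (({0} : Set (Fin (M + 1))).domRestrict fun _ => u) :=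
    ⟨fun _ => hu, fun i j hij => absurd (Subtype.ext (i.2.trans j.2.symm)) hij⟩
  obtain ⟨b, hb⟩ := horth.exists_orthonormalBasis_extension_of_card_eq (by simpa using hE)
  refine ⟨fun k => b k.succ, fun x => ?_⟩
  rw [← b.sum_sq_norm_inner_right, Fin.sum_univ_succ, hb 0 rfl]

theorem sqNormP_eq_norm_sq {n N : ℕ} (p : Fin N → MvPolynomial (Fin n) ℂ) (z : Cn n) :
    sqNormP p z = ‖(WithLp.toLp 2 fun j => evalPoly (p j) z : Cn N)‖ ^ 2 := by
  simp [sqNormP, EuclideanSpace.norm_sq_eq, Complex.sq_norm]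

theorem sqNormP_C_mul {n M : ℕ} (a : ℂ) (Q : Fin M → MvPolynomial (Fin n) ℂ) (z : Cn n) :
    sqNormP (fun k => C a * Q k) z = Complex.normSq a * sqNormP Q z := by
  simp [sqNormP, evalPoly, Finset.mul_sum]

theorem sqNormP_C_sqrt_mul {n M : ℕ} {s : ℝ} (hs : 0 ≤ s) (Q : Fin M → MvPolynomial (Fin n) ℂ)
    (z : Cn n) : sqNormP (fun k => C (√s : ℂ) * Q k) z = s * sqNormP Q z := by
  rw [sqNormP_C_mul, Complex.normSq_ofReal, Real.mul_self_sqrt hs]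

theorem sqNormP_cons {n M : ℕ} (H : MvPolynomial (Fin n) ℂ)
    (Q : Fin M → MvPolynomial (Fin n) ℂ) (z : Cn n) :
    sqNormP (Fin.cons H Q : Fin (M + 1) → _) z = Complex.normSq (evalPoly H z) + sqNormP Q z :=
  Fin.sum_univ_succ _

theorem exists_sqNormP_eq_normSq_div_add {n M : ℕ} (p : Fin (M + 1) → MvPolynomial (Fin n) ℂ)
    {c : Fin (M + 1) → ℂ} (hc : c ≠ 0) :
    ∃ Q : Fin M → MvPolynomial (Fin n) ℂ, ∀ z : Cn n, sqNormP p z =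
      Complex.normSq (∑ j, c j * evalPoly (p j) z) / ∑ j, Complex.normSq (c j) + sqNormP Q z := by
  -- `⟪c', x⟫ = ∑ j, c j * x j`
  set c' : Cn (M + 1) := WithLp.toLp 2 (star c)
  have hc' : c' ≠ 0 := by simpa [c'] using hc
  obtain ⟨v, hv⟩ := exists_sq_norm_eq_sq_norm_inner_add_sum finrank_euclideanSpace_fin
    (norm_smul_inv_norm (𝕜 := ℂ) hc')
  refine ⟨fun k => ∑ j, star (v k j) • p j, fun z => ?_⟩
  have hnorm : ‖c'‖ ^ 2 = ∑ j, Complex.normSq (c j) := by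
    simp [c', EuclideanSpace.norm_sq_eq, Complex.sq_norm]
  rw [sqNormP_eq_norm_sq, hv, sqNormP_eq_norm_sq, EuclideanSpace.norm_sq_eq]
  congr 1
  · rw [inner_smul_left, norm_mul, mul_pow, ← hnorm]
    simp [c', EuclideanSpace.inner_toLp_toLp, dotProduct, Complex.sq_norm, mul_comm,
      div_eq_mul_inv]
  · simp [PiLp.inner_apply, evalPoly, Complex.sq_norm, mul_comm]

theorem Complex.normSq_sub_normSq_one_sub_mul_div (a w : ℂ) {t : ℝ} (ht : t ≠ 0) :
    normSq w - normSq (1 - a * w) / t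
      = ((t - normSq a) * normSq w + 2 * (a * w).re - 1) / t := by
  simp only [normSq_apply, sub_re, sub_im, mul_re, mul_im, one_re, one_im]
  field_simp
  ring

section CompletingTheSquare

variable {n M : ℕ} (g : MvPolynomial (Fin n) ℂ) (Q : Fin M → MvPolynomial (Fin n) ℂ)
  {t : ℝ} (ht : 0 < t) (a : ℂ) {ρ : Cn n → ℝ}

include ht

theorem exists_normSq_sub_normSq_one_sub_div_eq (he : t - Complex.normSq a ≠ 0) :
    ∃ G : MvPolynomial (Fin n) ℂ, ∀ z, Complex.normSq (evalPoly g z)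
      - Complex.normSq (1 - a * evalPoly g z) / t
        = (t - Complex.normSq a)⁻¹ * (Complex.normSq (evalPoly G z) - 1) := by
  set e := t - Complex.normSq a
  refine ⟨C (((√t)⁻¹ : ℝ) : ℂ) * (C (e : ℂ) * g + C (starRingEnd ℂ a)), fun z => ?_⟩
  set w := evalPoly g z
  have hGz : evalPoly (C (((√t)⁻¹ : ℝ) : ℂ) * (C (e : ℂ) * g + C (starRingEnd ℂ a))) z
      = ((√t)⁻¹ : ℝ) * (e * w + starRingEnd ℂ a) := by
    simp [evalPoly, w]
  have hsq : Complex.normSq (((√t)⁻¹ : ℝ) : ℂ) = t⁻¹ := by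
    rw [Complex.normSq_ofReal, ← mul_inv, Real.mul_self_sqrt ht.le]
  have hre : ((e : ℂ) * w * starRingEnd ℂ (starRingEnd ℂ a)).re = e * (a * w).re := by
    rw [Complex.conj_conj, mul_comm a w, mul_assoc, Complex.re_ofReal_mul]
  have ha : Complex.normSq a = t - e := by ring
  rw [hGz, Complex.normSq_mul, hsq, Complex.normSq_add, Complex.normSq_mul,
    Complex.normSq_ofReal, Complex.normSq_conj, hre,
    Complex.normSq_sub_normSq_one_sub_mul_div _ _ ht.ne', ha]
  field_simp
  ring

variable (hρ : ∀ z, ρ z = Complex.normSq (evalPoly g z)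
  - Complex.normSq (1 - a * evalPoly g z) / t - sqNormP Q z)
include hρ

theorem exists_ball_form (he : t - Complex.normSq a < 0) :
    ∃ γ : ℝ, 0 < γ ∧ ∃ P : Fin (M + 1) → MvPolynomial (Fin n) ℂ,
      ∀ z, ρ z = γ * (1 - sqNormP P z) := by
  obtain ⟨G, hG⟩ := exists_normSq_sub_normSq_one_sub_div_eq g ht a he.ne
  refine ⟨(-(t - Complex.normSq a))⁻¹, inv_pos.mpr (neg_pos.mpr he),
    Fin.cons G fun k => C (√(-(t - Complex.normSq a)) : ℂ) * Q k, fun z => ?_⟩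
  rw [hρ, hG, sqNormP_cons, sqNormP_C_sqrt_mul (neg_nonneg.mpr he.le)]
  have := he.ne
  field_simp
  ring

theorem exists_generalizedBall_form (he : 0 < t - Complex.normSq a) :
    ∃ γ : ℝ, 0 < γ ∧ ∃ (G : MvPolynomial (Fin n) ℂ) (P : Fin M → MvPolynomial (Fin n) ℂ),
      ∀ z, ρ z = γ * (Complex.normSq (evalPoly G z) - 1 - sqNormP P z) := by
  obtain ⟨G, hG⟩ := exists_normSq_sub_normSq_one_sub_div_eq g ht a he.ne'
  refine ⟨(t - Complex.normSq a)⁻¹, inv_pos.mpr he, G,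
    fun k => C (√(t - Complex.normSq a) : ℂ) * Q k, fun z => ?_⟩
  rw [hρ, hG, sqNormP_C_sqrt_mul he.le]
  have := he.ne'
  field_simp

theorem exists_heisenberg_form (he : Complex.normSq a = t) :
    ∃ (G : MvPolynomial (Fin n) ℂ) (P : Fin M → MvPolynomial (Fin n) ℂ),
      ∀ z, ρ z = (evalPoly G z).re - sqNormP P z := by
  refine ⟨C (2 * a / t) * g - C (t⁻¹ : ℂ), Q, fun z => ?_⟩
  rw [hρ, Complex.normSq_sub_normSq_one_sub_mul_div _ _ ht.ne', he]
  simp [evalPoly]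
  ring

end CompletingTheSquare

theorem exists_ball_form_of_smul_eq_one {n N : ℕ} {g : MvPolynomial (Fin n) ℂ} {a : ℂ}
    (hg : a • g = 1) (p : Fin N → MvPolynomial (Fin n) ℂ) :
    ∃ γ : ℝ, 0 < γ ∧ ∃ P : Fin N → MvPolynomial (Fin n) ℂ,
      ∀ z, Complex.normSq (evalPoly g z) - sqNormP p z = γ * (1 - sqNormP P z) := by
  have ha : a ≠ 0 := by
    rintro rfl
    simp at hg
  refine ⟨Complex.normSq a⁻¹, Complex.normSq_pos.mpr (inv_ne_zero ha), fun j => C a * p j,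
    fun z => ?_⟩
  have hgz : evalPoly g z = a⁻¹ := (inv_eq_of_mul_eq_one_right
    (by simpa [evalPoly] using congrArg (eval fun i => z i) hg)).symm
  rw [sqNormP_C_mul, hgz, Complex.normSq_inv]
  have := Complex.normSq_pos.mpr ha
  field_simp

theorem RatProperBallMap.totalDegree_p_le_s14 {n N d : ℕ} (F : RatProperBallMap n N d)
    (j : Fin N) : (F.p j).totalDegree ≤ d :=
  (le_max_of_le_left (Finset.le_sup (f := fun j => (F.p j).totalDegree)
    (Finset.mem_univ j))).trans_eq F.deg_eq.symm

theorem RatProperBallMap.totalDegree_g_le_s14 {n N d : ℕ} (F : RatProperBallMap n N d) :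
    F.g.totalDegree ≤ d :=
  (le_max_right _ _).trans_eq F.deg_eq.symm

theorem maximal_embedding_dimension_polynomial_general {n N d : ℕ}
    (F : RatProperBallMap n N d)
    (hli : LinearIndependent ℂ (Sum.elim F.p fun _ : Unit => F.g))
    (hmax : N + 1 = Nat.choose (n + d) d) :
    -- (i) polynomial map into the ball
    (∃ γ : ℝ, 0 < γ ∧ ∃ P : Fin N → MvPolynomial (Fin n) ℂ,
      ∀ z : Cn n, Complex.normSq (evalPoly F.g z) - sqNormP F.p z
        = γ * (1 - sqNormP P z)) ∨
    -- (ii) polynomial map into the generalized ball 𝔹_{1,N-1}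
    (∃ γ : ℝ, 0 < γ ∧ ∃ (G : MvPolynomial (Fin n) ℂ) (P : Fin (N - 1) → MvPolynomial (Fin n) ℂ),
      ∀ z : Cn n, Complex.normSq (evalPoly F.g z) - sqNormP F.p z
        = γ * (Complex.normSq (evalPoly G z) - 1 - sqNormP P z)) ∨
    -- (iii) polynomial map into the Heisenberg model ℍ_N
    (∃ (G : MvPolynomial (Fin n) ℂ) (P : Fin (N - 1) → MvPolynomial (Fin n) ℂ),
      ∀ z : Cn n, Complex.normSq (evalPoly F.g z) - sqNormP F.p z
        = (evalPoly G z).re - sqNormP P z) := by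
  obtain ⟨c, hc⟩ := exists_sum_smul_eq_one
    (Sum.forall.mpr ⟨F.totalDegree_p_le_s14, fun _ => F.totalDegree_g_le_s14⟩) hli (by simpa using hmax)
  simp only [Fintype.sum_sum_type, Sum.elim_inl, Sum.elim_inr, Fintype.univ_unit,
    Finset.sum_singleton] at hc
  set a := c (Sum.inr ())
  by_cases hp : (fun j => c (Sum.inl j)) = 0
  · refine Or.inl (exists_ball_form_of_smul_eq_one (a := a) ?_ F.p)
    simpa [show ∀ j, c (Sum.inl j) = 0 from congrFun hp] using hc
  obtain ⟨M, rfl⟩ : ∃ M, N = M + 1 :=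
    Nat.exists_eq_add_one_of_ne_zero (by rintro rfl; exact hp (funext fun j => j.elim0))
  obtain ⟨Q, hQ⟩ := exists_sqNormP_eq_normSq_div_add F.p hp
  set t := ∑ j, Complex.normSq (c (Sum.inl j))
  have ht : 0 < t := by
    obtain ⟨j, hj⟩ := Function.ne_iff.mp hp
    exact Finset.sum_pos' (fun _ _ => Complex.normSq_nonneg _)
      ⟨j, Finset.mem_univ j, Complex.normSq_pos.mpr hj⟩
  have hρ : ∀ z, Complex.normSq (evalPoly F.g z) - sqNormP F.p z = Complex.normSq (evalPoly F.g z)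
      - Complex.normSq (1 - a * evalPoly F.g z) / t - sqNormP Q z := by
    intro z
    have hcz := congrArg (eval fun i => z i) hc
    simp only [map_add, map_sum, smul_eval, map_one] at hcz
    rw [hQ z, show ∑ j, c (Sum.inl j) * evalPoly (F.p j) z = 1 - a * evalPoly F.g z by
      simp only [evalPoly]; linear_combination hcz]
    ring
  rcases lt_trichotomy (t - Complex.normSq a) 0 with he | he | he
  · exact Or.inl (exists_ball_form F.g Q ht a hρ he)
  · exact Or.inr (Or.inr (exists_heisenberg_form F.g Q ht a hρ (by linarith)))
  · exact Or.inr (Or.inl (exists_generalizedBall_form F.g Q ht a hρ he))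

theorem maximal_embedding_dimension_polynomial {n N d : ℕ}
    (F : RatProperBallMap n N d)
    (hg0 : MvPolynomial.constantCoeff F.g = 1)
    (hli : LinearIndependent ℂ (Sum.elim F.p fun _ : Unit => F.g))
    (hmax : N + 1 = Nat.choose (n + d) d) :
    -- (i) polynomial map into the ball
    (∃ γ : ℝ, 0 < γ ∧ ∃ P : Fin N → MvPolynomial (Fin n) ℂ,
      ∀ z : Cn n, Complex.normSq (evalPoly F.g z) - sqNormP F.p z
        = γ * (1 - sqNormP P z)) ∨
    -- (ii) polynomial map into the generalized ball 𝔹_{1,N-1}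
    (∃ γ : ℝ, 0 < γ ∧ ∃ (G : MvPolynomial (Fin n) ℂ) (P : Fin (N - 1) → MvPolynomial (Fin n) ℂ),
      ∀ z : Cn n, Complex.normSq (evalPoly F.g z) - sqNormP F.p z
        = γ * (Complex.normSq (evalPoly G z) - 1 - sqNormP P z)) ∨
    -- (iii) polynomial map into the Heisenberg model ℍ_N
    (∃ (G : MvPolynomial (Fin n) ℂ) (P : Fin (N - 1) → MvPolynomial (Fin n) ℂ),
      ∀ z : Cn n, Complex.normSq (evalPoly F.g z) - sqNormP F.p z
        = (evalPoly G z).re - sqNormP P z) :=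
  maximal_embedding_dimension_polynomial_general F hli hmax
end
end
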